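/- Let q = 2^m with m a positive integer and let K be a finite field with q^3 elements. Let A, B ∈ K be nonzero with A^q·B ≠ 1 and E(A,B) = 0. Then f_{A,B}(x) = x^(q^2−q+1) + A·x^(q^2) + B·x is not a bijection of K. -/

import Mathlib

/-
Put y = x^(q-1). Then f(x) = x·(y^q·(1 + A·y) + B), so in characteristic 2 the map f has a nonzero
root as soon as some y with y^(1+q+q²) = 1 satisfies y^q·(1 + A·y) = B: by Hilbert 90 in the cyclic
group Kˣ of order (q-1)(1+q+q²), such a y is a (q-1)-th power. The witness is
y = (1 + A^q·B)/(A + B^(1+q)). Writing σ for the Frobenius x ↦ x^q, both required equations become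
polynomial identities in A, σA, σ²A, B, σB, σ²B modulo E(A,B) = 0; the denominator does not
vanish, since otherwise E(A,B) = (B^(1+q+q²) + 1)², which forces A^q·B = 1.
-/

section CharTwo

variable {F : Type*} [Field F] [CharP F 2] {a₀ a₁ a₂ b₀ b₁ b₂ : F}

theorem mul_eq_one_of_add_mul_eq_zero
    (hE : a₀ * a₁ * a₂ + a₀ * b₂ + a₁ * b₀ + a₂ * b₁ + b₀ * b₁ * b₂ + 1 = 0)
    (h₀ : a₀ + b₀ * b₁ = 0) (h₁ : a₁ + b₁ * b₂ = 0) (h₂ : a₂ + b₂ * b₀ = 0) :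
    a₁ * b₀ = 1 := by
  have hsq : (b₀ * b₁ * b₂ + 1) ^ 2 = 0 := by
    linear_combination hE + (-b₂ - a₁ * a₂) * h₀ + (-b₀ + a₂ * b₀ * b₁) * h₁
      + (-b₁ - b₀ * b₁ ^ 2 * b₂) * h₂
      + (2 * (b₀ * b₁ * b₂) + (b₀ * b₁ * b₂) ^ 2) * (CharTwo.two_eq_zero : (2 : F) = 0)
  linear_combination b₀ * h₁ - (pow_eq_zero_iff two_ne_zero).mp hsq

theorem div_mul_one_add_mul_div_eq
    (hE : a₀ * a₁ * a₂ + a₀ * b₂ + a₁ * b₀ + a₂ * b₁ + b₀ * b₁ * b₂ + 1 = 0)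
    (hd₀ : a₀ + b₀ * b₁ ≠ 0) (hd₁ : a₁ + b₁ * b₂ ≠ 0) :
    (1 + a₂ * b₁) / (a₁ + b₁ * b₂) * (1 + a₀ * ((1 + a₁ * b₀) / (a₀ + b₀ * b₁))) = b₀ := by
  rw [mul_div_assoc', one_add_div hd₀, div_mul_div_comm, div_eq_iff (mul_ne_zero hd₁ hd₀)]
  linear_combination (b₀ * b₁) * hE
    + (a₀ * a₂ * b₁ - a₀ * b₀ * b₁ * b₂ - a₁ * b₀ ^ 2 * b₁ - b₀ ^ 2 * b₁ ^ 2 * b₂ + a₀)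
      * (CharTwo.two_eq_zero : (2 : F) = 0)

theorem div_mul_div_mul_div_eq_one
    (hE : a₀ * a₁ * a₂ + a₀ * b₂ + a₁ * b₀ + a₂ * b₁ + b₀ * b₁ * b₂ + 1 = 0)
    (hd₀ : a₀ + b₀ * b₁ ≠ 0) (hd₁ : a₁ + b₁ * b₂ ≠ 0) (hd₂ : a₂ + b₂ * b₀ ≠ 0) :
    (1 + a₁ * b₀) / (a₀ + b₀ * b₁) * ((1 + a₂ * b₁) / (a₁ + b₁ * b₂)) *
      ((1 + a₀ * b₂) / (a₂ + b₂ * b₀)) = 1 := by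
  rw [div_mul_div_comm, div_mul_div_comm,
    div_eq_one_iff_eq (mul_ne_zero (mul_ne_zero hd₀ hd₁) hd₂)]
  linear_combination (1 + b₀ * b₁ * b₂) * hE
    - (a₀ * a₁ * a₂ + a₁ * b₀ ^ 2 * b₁ * b₂ + a₂ * b₀ * b₁ ^ 2 * b₂ + a₀ * b₀ * b₁ * b₂ ^ 2
      + b₀ * b₁ * b₂ + b₀ ^ 2 * b₁ ^ 2 * b₂ ^ 2) * (CharTwo.two_eq_zero : (2 : F) = 0)

theorem exists_norm_eq_one_and_map_mul_one_add_mul_eq (σ : F →+* F)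
    (hσ : ∀ x, σ (σ (σ x)) = x) {A B : F} (h1 : σ A * B ≠ 1)
    (hE : A * σ A * σ (σ A) + A * σ (σ B) + σ A * B + σ (σ A) * σ B
      + B * σ B * σ (σ B) + 1 = 0) :
    ∃ y, y * σ y * σ (σ y) = 1 ∧ σ y * (1 + A * y) = B := by
  have hd₀ : A + B * σ B ≠ 0 := fun h ↦ h1 <| by
    refine mul_eq_one_of_add_mul_eq_zero hE h ?_ ?_
    · simpa using congrArg σ h
    · simpa [hσ] using congrArg (σ ∘ σ) h
  have hd₁ : σ A + σ B * σ (σ B) ≠ 0 := by simpa using (map_ne_zero σ).mpr hd₀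
  have hd₂ : σ (σ A) + σ (σ B) * B ≠ 0 := by simpa [hσ] using (map_ne_zero σ).mpr hd₁
  refine ⟨(1 + σ A * B) / (A + B * σ B), ?_, ?_⟩
  · simpa [hσ] using div_mul_div_mul_div_eq_one hE hd₀ hd₁ hd₂
  · simpa [hσ] using div_mul_one_add_mul_div_eq hE hd₀ hd₁

end CharTwo

theorem IsCyclic.exists_pow_eq_of_pow_eq_one {G : Type*} [CommGroup G] [IsCyclic G] [Finite G]
    {a b : ℕ} (hcard : Nat.card G = a * b) {g : G} (hg : g ^ b = 1) : ∃ h : G, h ^ a = g := by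
  have ha : a ≠ 0 := by rintro rfl; exact Nat.card_pos.ne' (hcard.trans (zero_mul b))
  have hle : (powMonoidHom a : G →* G).range ≤ (powMonoidHom b).ker := by
    rintro _ ⟨h, rfl⟩
    simp [← pow_mul, ← hcard, pow_card_eq_one']
  have heq := Subgroup.eq_of_le_of_card_ge hle <| by
    rw [IsCyclic.card_powMonoidHom_ker, IsCyclic.card_powMonoidHom_range, hcard,
      Nat.gcd_mul_left_left, Nat.gcd_mul_right_left,
      Nat.mul_div_cancel_left _ (Nat.pos_of_ne_zero ha)]
  exact heq.ge hg

theorem FiniteField.exists_pow_sub_one_eq {K : Type*} [Field K] [Fintype K] {q : ℕ}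
    (hK : Fintype.card K = q ^ 3) {y : K} (hy : y ^ (q ^ 2 + q + 1) = 1) :
    ∃ x : K, x ≠ 0 ∧ x ^ (q - 1) = y := by
  have hy0 : y ≠ 0 := by rintro rfl; simp at hy
  have hcard : Nat.card Kˣ = (q - 1) * (q ^ 2 + q + 1) := by
    rw [Nat.card_units, Nat.card_eq_fintype_card, hK]
    rcases q with _ | q
    · simp
    · rw [Nat.add_sub_cancel]; apply Nat.sub_eq_of_eq_add; ring
  obtain ⟨x, hx⟩ := IsCyclic.exists_pow_eq_of_pow_eq_one hcard
    (g := Units.mk0 y hy0) (Units.ext <| by simpa using hy)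
  exact ⟨x, x.ne_zero, by simpa using congrArg Units.val hx⟩

theorem trinomial_eq_mul {R : Type*} [CommRing R] {q : ℕ} (hq : 1 ≤ q) (A B x : R) :
    x ^ (q ^ 2 - q + 1) + A * x ^ (q ^ 2) + B * x
      = x * ((x ^ (q - 1)) ^ q * (1 + A * x ^ (q - 1)) + B) := by
  obtain ⟨r, rfl⟩ : ∃ r, q = r + 1 := ⟨q - 1, by omega⟩
  have hexp : (r + 1) ^ 2 - (r + 1) + 1 = r * (r + 1) + 1 := by
    rw [show (r + 1) ^ 2 = r * (r + 1) + (r + 1) by ring]; omega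
  rw [hexp, Nat.add_sub_cancel]
  ring

theorem stmt_6_general (m : ℕ) (hm : 1 ≤ m) (q : ℕ) (hq : q = 2 ^ m)
    (K : Type*) [Field K] [Fintype K] (hK : Fintype.card K = q ^ 3)
    (A B : K)
    (h1 : A ^ q * B ≠ 1)
    (hE : A ^ (1 + q + q ^ 2) + A * B ^ (q ^ 2) + A ^ q * B + A ^ (q ^ 2) * B ^ q +
        B ^ (1 + q + q ^ 2) + 1 = 0) :
    ¬ Function.Bijective (fun x : K => x ^ (q ^ 2 - q + 1) + A * x ^ (q ^ 2) + B * x) := by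
  have hq0 : q ≠ 0 := hq ▸ (Nat.two_pow_pos m).ne'
  have : CharP K 2 := ringChar.of_eq <| FiniteField.even_card_iff_char_two.mpr <| by
    rw [hK, hq, ← pow_mul, Nat.pow_mod]; simp [show m * 3 ≠ 0 by omega]
  set σ := iterateFrobenius K 2 m
  have hσ : ∀ x, σ x = x ^ q := fun x ↦ by rw [iterateFrobenius_def, hq]
  have hσ3 : ∀ x, σ (σ (σ x)) = x := fun x ↦ by
    rw [hσ, hσ, hσ, ← pow_mul, ← pow_mul, show q * (q * q) = Fintype.card K by rw [hK]; ring,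
      FiniteField.pow_card]
  obtain ⟨y, hnorm, hy⟩ := exists_norm_eq_one_and_map_mul_one_add_mul_eq σ hσ3
    (by rwa [hσ]) (by simp only [hσ]; linear_combination hE)
  obtain ⟨x, hx0, rfl⟩ := FiniteField.exists_pow_sub_one_eq hK
    (by simp only [hσ] at hnorm; linear_combination hnorm)
  rw [hσ] at hy
  refine fun hbij ↦ hx0 (hbij.injective ?_)
  simp [trinomial_eq_mul (Nat.one_le_iff_ne_zero.mpr hq0), hy, CharTwo.add_self_eq_zero, hq0]

theorem stmt_6 (m : ℕ) (hm : 1 ≤ m) (q : ℕ) (hq : q = 2 ^ m)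
    (K : Type*) [Field K] [Fintype K] (hK : Fintype.card K = q ^ 3)
    (A B : K) (hA : A ≠ 0) (hB : B ≠ 0)
    (h1 : A ^ q * B ≠ 1)
    (hE : A ^ (1 + q + q ^ 2) + A * B ^ (q ^ 2) + A ^ q * B + A ^ (q ^ 2) * B ^ q +
        B ^ (1 + q + q ^ 2) + 1 = 0) :
    ¬ Function.Bijective (fun x : K => x ^ (q ^ 2 - q + 1) + A * x ^ (q ^ 2) + B * x) :=
  stmt_6_general m hm q hq K hK A B h1 hE
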